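/- Let M be a real symmetric n×n matrix (n ≥ 1) all of whose eigenvalues lie in [-1, 1], let k ≥ 0, and let z_1, …, z_R be independent random vectors in ℝⁿ, each with independent Rademacher coordinates (uniform on {−1, +1}). Define the Hutchinson moment estimator μ̂_k = (1/(nR)) Σ_{r=1}^{R} z_rᵀ T_k(M) z_r. Then μ̂_k is unbiased, E[μ̂_k] = (1/n)·tr(T_k(M)), and its variance satisfies Var(μ̂_k) ≤ 2/(nR); in particular its standard deviation is at most sqrt(2/(nR)). -/

import Mathlib

open MeasureTheory Matrix ProbabilityTheory Polynomial
open scoped ENNReal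

noncomputable def rademacher : Measure ℝ :=
  (2 : ℝ≥0∞)⁻¹ • Measure.dirac (-1) + (2 : ℝ≥0∞)⁻¹ • Measure.dirac 1

noncomputable def rademacherProbes (n R : ℕ) : Measure (Fin R → Fin n → ℝ) :=
  Measure.pi fun _ => Measure.pi fun _ => rademacher

noncomputable def hutchinsonEstimator (n R : ℕ) (M : Matrix (Fin n) (Fin n) ℝ)
    (k : ℕ) (z : Fin R → Fin n → ℝ) : ℝ :=
  ((n : ℝ) * R)⁻¹ * ∑ r, ∑ i, ∑ j,
    z r i * (Polynomial.aeval M (Polynomial.Chebyshev.T ℝ k)) i j * z r j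

/-!
On the cube `{±1}ⁿ` the Walsh functions `w ↦ ∏ i ∈ S, w i` are orthonormal: since `w i ^ 2 = 1`,
the product of two of them is the Walsh function of the symmetric difference. As `w i * w j` is
the Walsh function of `{i} ∆ {j}`, the quadratic form `wᵀ B w` has Walsh coefficients
`c S = ∑_{{i} ∆ {j} = S} B i j`. Its mean is `c ∅ = tr B`, and by Parseval its variance is
`∑_{S ≠ ∅} (c S)²`; a nonempty `S` collects at most two entries of `B`, so the variance is at most
`2 ‖B‖_F²`. For `B = T_k(M)` we have `‖B‖_F² = ∑ T_k(λ_i)² ≤ n`, and averaging `R` independent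
probes divides the variance by `R`.
-/

open scoped symmDiff Finset

instance : IsProbabilityMeasure rademacher := by
  constructor
  simp [rademacher, ENNReal.inv_two_add_inv_two]

lemma integral_rademacher (f : ℝ → ℝ) :
    ∫ x, f x ∂rademacher = (f (-1) + f 1) / 2 := by
  rw [rademacher, integral_add_measure, integral_smul_measure, integral_smul_measure,
    integral_dirac, integral_dirac]
  · simp; ring
  all_goals exact (integrable_dirac (by simp)).smul_measure (by simp)

lemma ae_rademacher_sq_eq_one : ∀ᵐ x ∂rademacher, x ^ 2 = 1 := by
  simp [rademacher, ae_dirac_eq]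

noncomputable def rademacherVector (ι : Type*) [Fintype ι] : Measure (ι → ℝ) :=
  Measure.pi fun _ => rademacher

section Walsh

variable {ι : Type*} [Fintype ι]

instance : IsProbabilityMeasure (rademacherVector ι) := by
  unfold rademacherVector; infer_instance

lemma ae_rademacherVector_sq_eq_one : ∀ᵐ w ∂rademacherVector ι, ∀ i, w i ^ 2 = 1 :=
  (Filter.eventually_pi fun _ => ae_rademacher_sq_eq_one).filter_mono Measure.ae_pi_le_pi

def walsh (S : Finset ι) (w : ι → ℝ) : ℝ := ∏ i ∈ S, w i

lemma walsh_mul_walsh_of_sq_eq_one [DecidableEq ι] {w : ι → ℝ} (hw : ∀ i, w i ^ 2 = 1)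
    (S T : Finset ι) : walsh S w * walsh T w = walsh (S ∆ T) w := by
  have hST : ∏ i ∈ S ∩ T, w i ^ 2 = 1 := Finset.prod_eq_one fun i _ => hw i
  have hunion : S ∪ T = S ∆ T ∪ S ∩ T := (symmDiff_sup_inf S T).symm
  have hdisj : Disjoint (S ∆ T) (S ∩ T) := disjoint_symmDiff_inf S T
  rw [walsh, walsh, walsh, ← Finset.prod_union_inter, hunion, Finset.prod_union hdisj, mul_assoc,
    ← sq, ← Finset.prod_pow, hST, mul_one]

lemma memLp_walsh (S : Finset ι) (p : ℝ≥0∞) : MemLp (walsh S) p (rademacherVector ι) := by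
  refine MemLp.of_bound (by unfold walsh; fun_prop) 1
    (ae_rademacherVector_sq_eq_one.mono fun w hw => ?_)
  have habs : ∀ i, |w i| = 1 := fun i =>
    (pow_eq_one_iff_of_nonneg (abs_nonneg _) two_ne_zero).1 (by rw [sq_abs, hw i])
  simp [walsh, habs]

lemma memLp_walsh_expansion (c : Finset ι → ℝ) (p : ℝ≥0∞) :
    MemLp (fun w => ∑ S, c S * walsh S w) p (rademacherVector ι) :=
  memLp_finsetSum _ fun S _ => (memLp_walsh S p).const_mul (c S)

variable [DecidableEq ι]

lemma integral_walsh (S : Finset ι) :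
    ∫ w, walsh S w ∂rademacherVector ι = if S = ∅ then 1 else 0 := by
  have hwalsh : ∀ w : ι → ℝ, walsh S w = ∏ i, if i ∈ S then w i else 1 := fun w => by
    rw [Finset.prod_ite_mem, Finset.univ_inter, walsh]
  have hfactor : ∀ i, ∫ x, (if i ∈ S then x else 1) ∂rademacher = if i ∉ S then 1 else 0 := by
    intro i
    by_cases hi : i ∈ S <;> simp [hi, integral_rademacher]
  simp_rw [hwalsh]
  rw [rademacherVector, integral_fintype_prod_eq_prod (fun i x => if i ∈ S then x else 1)]
  simp_rw [hfactor, Finset.prod_boole, Finset.eq_empty_iff_forall_notMem, Finset.mem_univ,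
    true_implies]

lemma integral_walsh_mul_walsh (S T : Finset ι) :
    ∫ w, walsh S w * walsh T w ∂rademacherVector ι = if S = T then 1 else 0 := by
  rw [integral_congr_ae (ae_rademacherVector_sq_eq_one.mono fun w hw =>
    walsh_mul_walsh_of_sq_eq_one hw S T), integral_walsh]
  simp [← Finset.bot_eq_empty, symmDiff_eq_bot]

lemma integral_walsh_expansion (c : Finset ι → ℝ) :
    ∫ w, ∑ S, c S * walsh S w ∂rademacherVector ι = c ∅ := by
  rw [integral_finsetSum _ fun S _ => ((memLp_walsh S 1).integrable le_rfl).const_mul (c S)]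
  simp [integral_const_mul, integral_walsh]

lemma integral_sq_walsh_expansion (c : Finset ι → ℝ) :
    ∫ w, (∑ S, c S * walsh S w) ^ 2 ∂rademacherVector ι = ∑ S, c S ^ 2 := by
  have hexpand : ∀ w, (∑ S, c S * walsh S w) ^ 2
      = ∑ S, ∑ T, c S * c T * (walsh S w * walsh T w) := fun w => by
    rw [sq, Finset.sum_mul_sum]
    exact Finset.sum_congr rfl fun S _ => Finset.sum_congr rfl fun T _ => by ring
  have hint : ∀ S T, Integrable (fun w => c S * c T * (walsh S w * walsh T w))
      (rademacherVector ι) := fun S T =>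
    (((memLp_walsh T 2).mul' (memLp_walsh S 2)).integrable le_rfl).const_mul _
  simp_rw [hexpand]
  rw [integral_finsetSum _ fun S _ => integrable_finsetSum _ fun T _ => hint S T]
  refine Finset.sum_congr rfl fun S _ => ?_
  rw [integral_finsetSum _ fun T _ => hint S T]
  simp [integral_const_mul, integral_walsh_mul_walsh, sq]

lemma variance_walsh_expansion (c : Finset ι → ℝ) :
    Var[fun w => ∑ S, c S * walsh S w; rademacherVector ι] =
      ∑ S ∈ Finset.univ.erase ∅, c S ^ 2 := by
  rw [variance_eq_sub (memLp_walsh_expansion c 2), Finset.sum_erase_eq_sub (Finset.mem_univ _)]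
  simp only [Pi.pow_apply, integral_sq_walsh_expansion, integral_walsh_expansion]

end Walsh

section QuadraticForm

variable {ι : Type*} [Fintype ι] [DecidableEq ι]

def quadWalshCoeff (B : Matrix ι ι ℝ) (S : Finset ι) : ℝ :=
  ∑ x : ι × ι with {x.1} ∆ {x.2} = S, B x.1 x.2

lemma dotProduct_mulVec_ae_eq_walsh_expansion (B : Matrix ι ι ℝ) :
    (fun w => w ⬝ᵥ B *ᵥ w) =ᵐ[rademacherVector ι]
      fun w => ∑ S, quadWalshCoeff B S * walsh S w := by
  filter_upwards [ae_rademacherVector_sq_eq_one] with w hw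
  have hpair : ∀ i j, w i * w j = walsh ({i} ∆ {j} : Finset ι) w := fun i j => by
    rw [← walsh_mul_walsh_of_sq_eq_one hw, walsh, walsh, Finset.prod_singleton,
      Finset.prod_singleton]
  calc w ⬝ᵥ B *ᵥ w = ∑ x : ι × ι, B x.1 x.2 * walsh ({x.1} ∆ {x.2} : Finset ι) w := by
        simp only [dotProduct, mulVec, Finset.mul_sum, Fintype.sum_prod_type, ← hpair]
        exact Finset.sum_congr rfl fun i _ => Finset.sum_congr rfl fun j _ => by ring
    _ = ∑ S, quadWalshCoeff B S * walsh S w := by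
        rw [← Finset.sum_fiberwise Finset.univ (fun x : ι × ι => ({x.1} ∆ {x.2} : Finset ι))]
        refine Finset.sum_congr rfl fun S _ => ?_
        rw [quadWalshCoeff, Finset.sum_mul]
        exact Finset.sum_congr rfl fun x hx => by rw [(Finset.mem_filter.1 hx).2]

lemma quadWalshCoeff_empty (B : Matrix ι ι ℝ) : quadWalshCoeff B ∅ = B.trace := by
  simp [quadWalshCoeff, ← Finset.bot_eq_empty, symmDiff_eq_bot, Finset.sum_filter,
    Fintype.sum_prod_type, Matrix.trace]

lemma card_filter_singleton_symmDiff_le_two {S : Finset ι} (hS : S ≠ ∅) :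
    #{x : ι × ι | {x.1} ∆ {x.2} = S} ≤ 2 := by
  set F : Finset (ι × ι) := {x | {x.1} ∆ {x.2} = S}
  have hF : ∀ a b, (a, b) ∈ F ↔ {a} ∆ {b} = S := fun a b => by simp [F]
  obtain hempty | ⟨⟨i, j⟩, hij⟩ := F.eq_empty_or_nonempty
  · simp [hempty]
  have hmaps : Set.MapsTo Prod.fst (F : Set (ι × ι)) (S : Set ι) := by
    rintro ⟨a, b⟩ hab
    have hab : {a} ∆ {b} = S := (hF a b).1 hab
    have hne : a ≠ b := fun h => hS (by rw [← hab, h, symmDiff_self, Finset.bot_eq_empty])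
    rw [Finset.mem_coe, ← hab, Finset.mem_symmDiff]
    simp [hne]
  have hinj : Set.InjOn Prod.fst (F : Set (ι × ι)) := by
    rintro ⟨a, b⟩ hab ⟨a', b'⟩ hab' (rfl : a = a')
    have hbb' := ((hF a b).1 hab).trans ((hF a b').1 hab').symm
    simpa using symmDiff_right_inj.1 hbb'
  calc #F ≤ #S := Finset.card_le_card_of_injOn _ hmaps hinj
    _ ≤ #({i, j} : Finset ι) := Finset.card_le_card (((hF i j).1 hij) ▸ symmDiff_le_sup)
    _ ≤ 2 := Finset.card_le_two

lemma sq_quadWalshCoeff_le (B : Matrix ι ι ℝ) {S : Finset ι} (hS : S ≠ ∅) :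
    quadWalshCoeff B S ^ 2 ≤ 2 * ∑ x : ι × ι with {x.1} ∆ {x.2} = S, B x.1 x.2 ^ 2 :=
  sq_sum_le_card_mul_sum_sq.trans <| by
    gcongr; exact_mod_cast card_filter_singleton_symmDiff_le_two hS

lemma integral_dotProduct_mulVec (B : Matrix ι ι ℝ) :
    ∫ w, w ⬝ᵥ B *ᵥ w ∂rademacherVector ι = B.trace := by
  rw [integral_congr_ae (dotProduct_mulVec_ae_eq_walsh_expansion B), integral_walsh_expansion,
    quadWalshCoeff_empty]

lemma memLp_dotProduct_mulVec (B : Matrix ι ι ℝ) (p : ℝ≥0∞) :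
    MemLp (fun w => w ⬝ᵥ B *ᵥ w) p (rademacherVector ι) :=
  (memLp_walsh_expansion _ p).ae_eq (dotProduct_mulVec_ae_eq_walsh_expansion B).symm

lemma variance_dotProduct_mulVec_le (B : Matrix ι ι ℝ) :
    Var[fun w => w ⬝ᵥ B *ᵥ w; rademacherVector ι] ≤ 2 * ∑ i, ∑ j, B i j ^ 2 := by
  rw [variance_congr (dotProduct_mulVec_ae_eq_walsh_expansion B), variance_walsh_expansion]
  calc ∑ S ∈ Finset.univ.erase ∅, quadWalshCoeff B S ^ 2
      ≤ ∑ S ∈ Finset.univ.erase ∅, 2 * ∑ x : ι × ι with {x.1} ∆ {x.2} = S, B x.1 x.2 ^ 2 :=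
        Finset.sum_le_sum fun S hS => sq_quadWalshCoeff_le B (Finset.ne_of_mem_erase hS)
    _ ≤ ∑ S, 2 * ∑ x : ι × ι with {x.1} ∆ {x.2} = S, B x.1 x.2 ^ 2 :=
        Finset.sum_le_sum_of_subset_of_nonneg (Finset.erase_subset _ _)
          fun _ _ _ => by positivity
    _ = 2 * ∑ i, ∑ j, B i j ^ 2 := by
        rw [← Finset.mul_sum, Finset.sum_fiberwise, Fintype.sum_prod_type]

end QuadraticForm

section IndependentCopies

variable {α κ : Type*} [MeasurableSpace α] [Fintype κ] {ν : Measure α} [IsProbabilityMeasure ν]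
  {g : α → ℝ}

lemma integral_sum_comp_eval (hg : Integrable g ν) :
    ∫ z, ∑ r, g (z r) ∂Measure.pi (fun _ : κ => ν) = Fintype.card κ * ∫ x, g x ∂ν := by
  rw [integral_finsetSum _ fun r _ => integrable_comp_eval hg]
  simp [integral_comp_eval (μ := fun _ : κ => ν) hg.aestronglyMeasurable]

lemma variance_sum_comp_eval (hg : MemLp g 2 ν) :
    Var[fun z => ∑ r, g (z r); Measure.pi fun _ : κ => ν] = Fintype.card κ * Var[g; ν] := by
  have hsum : (fun z : κ → α => ∑ r, g (z r)) = ∑ r, fun z => g (z r) := by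
    ext z; simp
  have hindep : iIndepFun (fun r (z : κ → α) => g (z r)) (Measure.pi fun _ => ν) :=
    iIndepFun_pi fun _ => hg.aemeasurable
  rw [hsum, IndepFun.variance_sum (X := fun r (z : κ → α) => g (z r))
    (fun r _ => hg.comp_measurePreserving (measurePreserving_eval _ r))
    fun r _ s _ hrs => hindep.indepFun hrs]
  simp [(measurePreserving_eval (fun _ : κ => ν) _).variance_fun_comp hg.aemeasurable]

end IndependentCopies

namespace Matrix.IsHermitian

variable {n 𝕜 : Type*} [Fintype n] [DecidableEq n] [RCLike 𝕜] {A : Matrix n n 𝕜}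

lemma trace_cfc (hA : A.IsHermitian) (f : ℝ → ℝ) :
    (cfc f A).trace = ∑ i, (f (hA.eigenvalues i) : 𝕜) := by
  rw [cfc_eq hA, IsHermitian.cfc, Unitary.conjStarAlgAut_apply, trace_mul_cycle,
    Unitary.coe_star_mul_self, Matrix.one_mul, trace_diagonal]
  rfl

lemma sum_sq_cfc_apply {A : Matrix n n ℝ} (hA : A.IsHermitian) (f : ℝ → ℝ) :
    ∑ i, ∑ j, cfc f A i j ^ 2 = ∑ i, f (hA.eigenvalues i) ^ 2 := by
  have hsymm : (cfc f A)ᵀ = cfc f A := by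
    rw [← conjTranspose_eq_transpose_of_trivial, ← star_eq_conjTranspose]
    exact (cfc_predicate f A).star_eq
  calc ∑ i, ∑ j, cfc f A i j ^ 2 = (cfc f A * cfc f A).trace := by
        simp only [trace, diag, mul_apply, sq]
        exact Finset.sum_congr rfl fun i _ => Finset.sum_congr rfl fun j _ => by
          rw [← transpose_apply (cfc f A) j i, hsymm]
    _ = ∑ i, f (hA.eigenvalues i) ^ 2 := by
        have hf : ContinuousOn f (spectrum ℝ A) := A.finite_spectrum.continuousOn f
        rw [← cfc_mul f f A, hA.trace_cfc]
        simp [sq]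

end Matrix.IsHermitian

lemma sum_sq_aeval_chebyshevT_le {n : Type*} [Fintype n] [DecidableEq n] {M : Matrix n n ℝ}
    (hM : M.IsHermitian) (hspec : ∀ i, hM.eigenvalues i ∈ Set.Icc (-1 : ℝ) 1) (k : ℤ) :
    ∑ i, ∑ j, aeval M (Chebyshev.T ℝ k) i j ^ 2 ≤ Fintype.card n := by
  rw [← cfc_polynomial (Chebyshev.T ℝ k) M hM.isSelfAdjoint, hM.sum_sq_cfc_apply]
  calc ∑ i, (Chebyshev.T ℝ k).eval (hM.eigenvalues i) ^ 2 ≤ ∑ _i : n, (1 : ℝ) :=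
        Finset.sum_le_sum fun i _ => by
          rw [← sq_abs]
          exact pow_le_one₀ (abs_nonneg _)
            (Chebyshev.abs_eval_T_real_le_one k (abs_le.2 (hspec i)))
    _ = Fintype.card n := by simp

lemma hutchinsonEstimator_eq (n R : ℕ) (M : Matrix (Fin n) (Fin n) ℝ) (k : ℕ) :
    hutchinsonEstimator n R M k = fun z =>
      ((n : ℝ) * R)⁻¹ * ∑ r, z r ⬝ᵥ aeval M (Chebyshev.T ℝ k) *ᵥ z r := by
  ext z
  simp only [hutchinsonEstimator, dotProduct, mulVec, Finset.mul_sum, mul_assoc]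

theorem hutchinson_estimator_unbiased_variance_general
    (n R : ℕ) (hR : 1 ≤ R)
    (M : Matrix (Fin n) (Fin n) ℝ) (hM : M.IsHermitian)
    (hspec : ∀ i, hM.eigenvalues i ∈ Set.Icc (-1 : ℝ) 1)
    (k : ℕ) :
    (∫ z, hutchinsonEstimator n R M k z ∂(rademacherProbes n R)) =
      (n : ℝ)⁻¹ * (Polynomial.aeval M (Polynomial.Chebyshev.T ℝ k)).trace ∧
    variance (hutchinsonEstimator n R M k) (rademacherProbes n R) ≤
      2 / ((n : ℝ) * R) := by
  set B := aeval M (Chebyshev.T ℝ k)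
  have hprobes : rademacherProbes n R = Measure.pi fun _ => rademacherVector (Fin n) := rfl
  have hR0 : (R : ℝ) ≠ 0 := Nat.cast_ne_zero.2 (by omega)
  rw [hutchinsonEstimator_eq, hprobes]
  constructor
  · rw [integral_const_mul,
      integral_sum_comp_eval ((memLp_dotProduct_mulVec B 1).integrable le_rfl),
      integral_dotProduct_mulVec, Fintype.card_fin]
    field_simp
  · have hvar : Var[fun w => w ⬝ᵥ B *ᵥ w; rademacherVector (Fin n)] ≤ 2 * n :=
      (variance_dotProduct_mulVec_le B).trans <| by
        simpa using sum_sq_aeval_chebyshevT_le hM hspec k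
    rw [variance_const_mul, variance_sum_comp_eval (memLp_dotProduct_mulVec B 2),
      Fintype.card_fin]
    calc ((n : ℝ) * R)⁻¹ ^ 2 * (R * Var[fun w => w ⬝ᵥ B *ᵥ w; rademacherVector (Fin n)])
        ≤ ((n : ℝ) * R)⁻¹ ^ 2 * (R * (2 * n)) := by gcongr
      -- `x⁻¹ * x⁻¹ * x = x⁻¹` holds for every real `x`, including `x = 0`
      _ = 2 * (((n : ℝ) * R)⁻¹ * ((n : ℝ) * R)⁻¹ * ((n : ℝ) * R)⁻¹⁻¹) := by
        rw [inv_inv]; ring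
      _ = 2 / ((n : ℝ) * R) := by rw [mul_self_mul_inv, div_eq_mul_inv]

theorem hutchinson_estimator_unbiased_variance
    (n R : ℕ) (hn : 1 ≤ n) (hR : 1 ≤ R)
    (M : Matrix (Fin n) (Fin n) ℝ) (hM : M.IsHermitian)
    (hspec : ∀ i, hM.eigenvalues i ∈ Set.Icc (-1 : ℝ) 1)
    (k : ℕ) :
    (∫ z, hutchinsonEstimator n R M k z ∂(rademacherProbes n R)) =
      (n : ℝ)⁻¹ * (Polynomial.aeval M (Polynomial.Chebyshev.T ℝ k)).trace ∧
    variance (hutchinsonEstimator n R M k) (rademacherProbes n R) ≤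
      2 / ((n : ℝ) * R) :=
  hutchinson_estimator_unbiased_variance_general n R hR M hM hspec k
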